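/- arXiv:1412.6724 — 7 statements merged into one kernel-verified Lean document; each statement's English description precedes it below -/
import Mathlib

section
/- Let Δ > 0 and θ₀ ∈ ℝ, and let θ̄_l = Δ·l + θ₀ for l = 1, …, L. Let c, ĉ ∈ ℝ^L be nonnegative vectors, each having exactly K nonzero entries, all of whose nonzero entries are equal to a common value c₀ > 0, with supports S = {s₁, …, s_K} and Ŝ = {ŝ₁, …, ŝ_K}, and let θ = (θ̄_{s₁}, …, θ̄_{s_K}) and θ̂ = (θ̄_{ŝ₁}, …, θ̄_{ŝ_K}). Then EMD(c, ĉ) = (c₀ / Δ) · PEE(θ, θ̂); that is, when all component magnitudes are equal the relationship between the earth mover's distance and the parameter estimation error is exactly linear. -/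
open Finset Pointwise

/-- Earth mover's distance between two nonnegative vectors in `ℝ^L` with equal `ℓ₁` norm:
the minimum total work `∑ f i j * |i - j|` over all nonnegative flows `f` whose row sums
are `u` and whose column sums are `w`. -/
noncomputable def EMD {L : ℕ} (u w : Fin L → ℝ) : ℝ :=
  sInf { x | ∃ f : Fin L → Fin L → ℝ,
    (∀ i j, 0 ≤ f i j) ∧ (∀ i, ∑ j, f i j = u i) ∧ (∀ j, ∑ i, f i j = w j) ∧
    x = ∑ i, ∑ j, f i j * |(i : ℝ) - (j : ℝ)| }

/-- Parameter estimation error between two tuples of `K` parameters: the minimum of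
`∑ g i j * |θ i - θh j|` over all doubly stochastic matrices `g`. -/
noncomputable def PEE {K : ℕ} (θ θh : Fin K → ℝ) : ℝ :=
  sInf { x | ∃ g : Fin K → Fin K → ℝ,
    (∀ i j, 0 ≤ g i j) ∧ (∀ i, ∑ j, g i j = 1) ∧ (∀ j, ∑ i, g i j = 1) ∧
    x = ∑ i, ∑ j, g i j * |θ i - θh j| }

private lemma emd_sum_collapse {L K : ℕ} (s : Fin K → Fin L) (hs : Function.Injective s)
    (F : Fin L → ℝ) (h0 : ∀ i, (∀ k, s k ≠ i) → F i = 0) :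
    ∑ i, F i = ∑ k, F (s k) := by
  have h1 : ∑ i ∈ Finset.image s Finset.univ, F i = ∑ k, F (s k) :=
    Finset.sum_image (fun x _ y _ h => hs h)
  have h2 : ∑ i ∈ Finset.image s Finset.univ, F i = ∑ i, F i := by
    apply Finset.sum_subset (Finset.subset_univ _)
    intro i _ hi
    exact h0 i (fun k hk => hi (Finset.mem_image.mpr ⟨k, Finset.mem_univ k, hk⟩))
  rw [← h2, h1]

/-- If `c` and `chat` are nonnegative vectors, each with exactly `K`
nonzero entries all equal to a common value `c₀ > 0`, with supports `s` and `shat` on the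
uniform parameter grid `θ̄_l = Δ·l + θ₀`, then the earth mover's distance between the
vectors equals `(c₀ / Δ)` times the parameter estimation error between the corresponding
parameter tuples: the relationship is exactly linear. -/
theorem emd_eq_pee_of_equal_magnitudes {L K : ℕ} (Δ θ₀ : ℝ) (hΔ : 0 < Δ)
    (θbar : Fin L → ℝ) (hθbar : ∀ l : Fin L, θbar l = Δ * ((l : ℝ) + 1) + θ₀)
    (c chat : Fin L → ℝ) (hc : ∀ l, 0 ≤ c l) (hchat : ∀ l, 0 ≤ chat l)
    (c₀ : ℝ) (hc₀ : 0 < c₀)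
    (s shat : Fin K → Fin L) (hs : Function.Injective s) (hshat : Function.Injective shat)
    (hsupp : ∀ l, c l ≠ 0 ↔ ∃ k, s k = l)
    (hsupp' : ∀ l, chat l ≠ 0 ↔ ∃ k, shat k = l)
    (hval : ∀ k, c (s k) = c₀) (hval' : ∀ k, chat (shat k) = c₀) :
    EMD c chat = (c₀ / Δ) * PEE (fun k => θbar (s k)) (fun k => θbar (shat k)) := by
  classical
  -- base set
  set T : Set ℝ :=
    { y | ∃ g : Fin K → Fin K → ℝ,
      (∀ i j, 0 ≤ g i j) ∧ (∀ i, ∑ j, g i j = 1) ∧ (∀ j, ∑ i, g i j = 1) ∧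
      y = ∑ i, ∑ j, g i j * |((s i : ℝ)) - ((shat j : ℝ))| } with hT
  have key : ∀ i j : Fin K,
      |θbar (s i) - θbar (shat j)| = Δ * |((s i : ℝ)) - ((shat j : ℝ))| := by
    intro i j
    rw [hθbar, hθbar,
      show Δ * (((s i : ℝ)) + 1) + θ₀ - (Δ * (((shat j : ℝ)) + 1) + θ₀)
        = Δ * (((s i : ℝ)) - ((shat j : ℝ))) by ring,
      abs_mul, abs_of_pos hΔ]
  -- PEE set = Δ • T
  have hPEE : { x | ∃ g : Fin K → Fin K → ℝ,
      (∀ i j, 0 ≤ g i j) ∧ (∀ i, ∑ j, g i j = 1) ∧ (∀ j, ∑ i, g i j = 1) ∧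
      x = ∑ i, ∑ j, g i j * |(fun k => θbar (s k)) i - (fun k => θbar (shat k)) j| }
      = Δ • T := by
    ext x
    constructor
    · rintro ⟨g, hg0, hg1, hg2, rfl⟩
      refine Set.mem_smul_set.mpr ⟨_, ⟨g, hg0, hg1, hg2, rfl⟩, ?_⟩
      rw [smul_eq_mul, Finset.mul_sum]
      exact (Finset.sum_congr rfl fun i _ => by
        rw [Finset.mul_sum]
        exact Finset.sum_congr rfl fun j _ => by simp only []; rw [key]; ring).symm
    · rintro hx
      obtain ⟨y, ⟨g, hg0, hg1, hg2, rfl⟩, rfl⟩ := Set.mem_smul_set.mp hx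
      refine ⟨g, hg0, hg1, hg2, ?_⟩
      rw [smul_eq_mul, Finset.mul_sum]
      exact Finset.sum_congr rfl fun i _ => by
        rw [Finset.mul_sum]
        exact Finset.sum_congr rfl fun j _ => by simp only []; rw [key]; ring
  -- EMD set = c₀ • T
  have hEMD : { x | ∃ f : Fin L → Fin L → ℝ,
      (∀ i j, 0 ≤ f i j) ∧ (∀ i, ∑ j, f i j = c i) ∧ (∀ j, ∑ i, f i j = chat j) ∧
      x = ∑ i, ∑ j, f i j * |(i : ℝ) - (j : ℝ)| } = c₀ • T := by
    ext x
    constructor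
    · rintro ⟨f, hf0, hfr, hfc, rfl⟩
      -- f vanishes off the supports
      have hzr : ∀ i j, (∀ k, s k ≠ i) → f i j = 0 := by
        intro i j hi
        have hci : c i = 0 := by
          by_contra h
          obtain ⟨k, hk⟩ := (hsupp i).mp h
          exact hi k hk
        have hle : f i j ≤ ∑ j', f i j' :=
          Finset.single_le_sum (fun j' _ => hf0 i j') (Finset.mem_univ j)
        rw [hfr i, hci] at hle
        exact le_antisymm hle (hf0 i j)
      have hzc : ∀ i j, (∀ k, shat k ≠ j) → f i j = 0 := by
        intro i j hj
        have hcj : chat j = 0 := by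
          by_contra h
          obtain ⟨k, hk⟩ := (hsupp' j).mp h
          exact hj k hk
        have hle : f i j ≤ ∑ i', f i' j :=
          Finset.single_le_sum (fun i' _ => hf0 i' j) (Finset.mem_univ i)
        rw [hfc j, hcj] at hle
        exact le_antisymm hle (hf0 i j)
      set g : Fin K → Fin K → ℝ := fun k k' => f (s k) (shat k') / c₀ with hgdef
      have hrowg : ∀ k, ∑ k', g k k' = 1 := by
        intro k
        have : ∑ k', f (s k) (shat k') = c (s k) := by
          rw [← hfr (s k)]
          exact (emd_sum_collapse shat hshat _ (fun j hj => hzc (s k) j hj)).symm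
        rw [hgdef]
        simp only [← Finset.sum_div]
        rw [this, hval k, div_self hc₀.ne']
      have hcolg : ∀ k', ∑ k, g k k' = 1 := by
        intro k'
        have : ∑ k, f (s k) (shat k') = chat (shat k') := by
          rw [← hfc (shat k')]
          exact (emd_sum_collapse s hs _ (fun i hi => hzr i (shat k') hi)).symm
        simp only [hgdef, ← Finset.sum_div]
        rw [this, hval' k', div_self hc₀.ne']
      refine Set.mem_smul_set.mpr ⟨_, ⟨g, fun k k' => div_nonneg (hf0 _ _) hc₀.le,
        hrowg, hcolg, rfl⟩, ?_⟩
      rw [smul_eq_mul, Finset.mul_sum]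
      have hcollapse : ∑ i, ∑ j, f i j * |(i : ℝ) - (j : ℝ)|
          = ∑ k, ∑ k', f (s k) (shat k') * |((s k : ℝ)) - ((shat k' : ℝ))| := by
        rw [emd_sum_collapse s hs (fun i => ∑ j, f i j * |(i : ℝ) - (j : ℝ)|)
          (fun i hi => by simp [hzr i _ hi])]
        exact Finset.sum_congr rfl fun k _ =>
          emd_sum_collapse shat hshat (fun j => f (s k) j * |((s k : ℝ)) - (j : ℝ)|)
            (fun j hj => by simp [hzc (s k) j hj])
      rw [hcollapse]
      exact Finset.sum_congr rfl fun k _ => by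
        rw [Finset.mul_sum]
        exact Finset.sum_congr rfl fun k' _ => by
          rw [hgdef]
          field_simp
    · rintro hx
      obtain ⟨y, ⟨g, hg0, hg1, hg2, rfl⟩, rfl⟩ := Set.mem_smul_set.mp hx
      set f : Fin L → Fin L → ℝ :=
        fun i j => ∑ k, ∑ k', if s k = i ∧ shat k' = j then c₀ * g k k' else 0 with hfdef
      have hf0 : ∀ i j, 0 ≤ f i j := fun i j =>
        Finset.sum_nonneg fun k _ => Finset.sum_nonneg fun k' _ => by
          split
          · exact mul_nonneg hc₀.le (hg0 k k')
          · exact le_refl 0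
      have hstep : ∀ i, ∑ k, (if s k = i then c₀ else 0) = c i := by
        intro i
        by_cases hi : ∃ k, s k = i
        · obtain ⟨k0, hk0⟩ := hi
          rw [Finset.sum_eq_single k0]
          · rw [if_pos hk0, ← hk0, hval k0]
          · intro k _ hk
            rw [if_neg]
            intro h
            exact hk (hs (h.trans hk0.symm))
          · intro h
            exact absurd (Finset.mem_univ k0) h
        · have : c i = 0 := by
            by_contra h
            exact hi ((hsupp i).mp h)
          rw [this]
          apply Finset.sum_eq_zero
          intro k _
          rw [if_neg (fun h => hi ⟨k, h⟩)]
      have hstep' : ∀ j, ∑ k', (if shat k' = j then c₀ else 0) = chat j := by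
        intro j
        by_cases hj : ∃ k', shat k' = j
        · obtain ⟨k0, hk0⟩ := hj
          rw [Finset.sum_eq_single k0]
          · rw [if_pos hk0, ← hk0, hval' k0]
          · intro k _ hk
            rw [if_neg]
            intro h
            exact hk (hshat (h.trans hk0.symm))
          · intro h
            exact absurd (Finset.mem_univ k0) h
        · have : chat j = 0 := by
            by_contra h
            exact hj ((hsupp' j).mp h)
          rw [this]
          apply Finset.sum_eq_zero
          intro k _
          rw [if_neg (fun h => hj ⟨k, h⟩)]
      have hfr : ∀ i, ∑ j, f i j = c i := by
        intro i
        have h1 : ∑ j, f i j = ∑ k, ∑ k', (if s k = i then c₀ * g k k' else 0) := by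
          rw [Finset.sum_comm]
          refine Finset.sum_congr rfl fun k _ => ?_
          rw [Finset.sum_comm]
          refine Finset.sum_congr rfl fun k' _ => ?_
          by_cases h : s k = i
          · simp [h]
          · simp [h]
        rw [h1, ← hstep i]
        refine Finset.sum_congr rfl fun k _ => ?_
        by_cases h : s k = i
        · simp [h, ← Finset.mul_sum, hg1 k]
        · simp [h]
      have hfc : ∀ j, ∑ i, f i j = chat j := by
        intro j
        have h1 : ∑ i, f i j = ∑ k, ∑ k', (if shat k' = j then c₀ * g k k' else 0) := by
          rw [Finset.sum_comm]
          refine Finset.sum_congr rfl fun k _ => ?_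
          rw [Finset.sum_comm]
          refine Finset.sum_congr rfl fun k' _ => ?_
          by_cases h : shat k' = j
          · simp [h]
          · simp [h]
        rw [h1, ← hstep' j]
        rw [Finset.sum_comm]
        refine Finset.sum_congr rfl fun k' _ => ?_
        by_cases h : shat k' = j
        · simp [h, ← Finset.mul_sum, hg2 k']
        · simp [h]
      refine ⟨f, hf0, hfr, hfc, ?_⟩
      rw [smul_eq_mul, Finset.mul_sum]
      symm
      have h2 : ∀ i j, f i j * |(i : ℝ) - (j : ℝ)|
          = ∑ k, ∑ k', (if s k = i ∧ shat k' = j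
              then c₀ * g k k' * |(i : ℝ) - (j : ℝ)| else 0) := by
        intro i j
        simp only [hfdef]
        rw [Finset.sum_mul]
        refine Finset.sum_congr rfl fun k _ => ?_
        rw [Finset.sum_mul]
        refine Finset.sum_congr rfl fun k' _ => ?_
        rw [ite_mul, zero_mul]
      calc ∑ i, ∑ j, f i j * |(i : ℝ) - (j : ℝ)|
          = ∑ i, ∑ j, ∑ k, ∑ k', (if s k = i ∧ shat k' = j
              then c₀ * g k k' * |(i : ℝ) - (j : ℝ)| else 0) :=
            Finset.sum_congr rfl fun i _ => Finset.sum_congr rfl fun j _ => h2 i j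
        _ = ∑ i, ∑ k, ∑ k', ∑ j, (if s k = i ∧ shat k' = j
              then c₀ * g k k' * |(i : ℝ) - (j : ℝ)| else 0) :=
            Finset.sum_congr rfl fun i _ => by
              rw [Finset.sum_comm]
              exact Finset.sum_congr rfl fun k _ => Finset.sum_comm
        _ = ∑ k, ∑ k', ∑ i, ∑ j, (if s k = i ∧ shat k' = j
              then c₀ * g k k' * |(i : ℝ) - (j : ℝ)| else 0) := by
            rw [Finset.sum_comm]
            exact Finset.sum_congr rfl fun k _ => Finset.sum_comm
        _ = ∑ k, ∑ k', c₀ * g k k' * |((s k : ℝ)) - ((shat k' : ℝ))| := by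
            refine Finset.sum_congr rfl fun k _ => Finset.sum_congr rfl fun k' _ => ?_
            simp [ite_and, Finset.sum_ite_eq]
        _ = ∑ i, c₀ * ∑ j, g i j * |((s i : ℝ)) - ((shat j : ℝ))| := by
            refine Finset.sum_congr rfl fun k _ => ?_
            rw [Finset.mul_sum]
            exact Finset.sum_congr rfl fun k' _ => by ring
  -- combine
  rw [EMD, PEE, hEMD, hPEE, Real.sInf_smul_of_nonneg hc₀.le, Real.sInf_smul_of_nonneg hΔ.le,
    smul_eq_mul, smul_eq_mul, ← mul_assoc, div_mul_cancel₀ _ hΔ.ne']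
end

section
/- Let v ∈ ℝ^L be a nonnegative vector and let S ⊆ {1, …, L} be a set of K indices. Then the minimum of EMD(v, ĉ) over all nonnegative vectors ĉ ∈ ℝ^L supported on S (i.e., ĉ_j = 0 for j ∉ S) with ‖ĉ‖₁ = ‖v‖₁ equals ∑_{j=1}^L v_j · min_{s ∈ S} |j − s|; moreover, this minimum is attained by the vector ĉ whose entry at each s ∈ S equals the total mass ∑_{j : s is a nearest element of S to j} v_j of the entries of v assigned to their nearest element of S. -/
open Finset

lemma flow_exists {L : ℕ} (u w : Fin L → ℝ) (hu : ∀ i, 0 ≤ u i) (hw : ∀ i, 0 ≤ w i)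
    (hsum : ∑ l, u l = ∑ l, w l) :
    ∃ f : Fin L → Fin L → ℝ, (∀ i j, 0 ≤ f i j) ∧ (∀ i, ∑ j, f i j = u i) ∧
      (∀ j, ∑ i, f i j = w j) := by
  by_cases h : ∑ l, u l = 0
  · refine ⟨fun _ _ => 0, fun _ _ => le_refl 0, ?_, ?_⟩
    · intro i
      have := (Finset.sum_eq_zero_iff_of_nonneg (fun i _ => hu i)).mp h i (Finset.mem_univ i)
      simp [this]
    · intro j
      have := (Finset.sum_eq_zero_iff_of_nonneg (fun i _ => hw i)).mp (hsum ▸ h) j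
        (Finset.mem_univ j)
      simp [this]
  · have htpos : 0 < ∑ l, u l :=
      lt_of_le_of_ne (Finset.sum_nonneg fun i _ => hu i) (Ne.symm h)
    refine ⟨fun i j => u i * w j / (∑ l, u l), ?_, ?_, ?_⟩
    · intro i j
      exact div_nonneg (mul_nonneg (hu i) (hw j)) htpos.le
    · intro i
      rw [← Finset.sum_div, ← Finset.mul_sum, ← hsum]
      field_simp
    · intro j
      rw [← Finset.sum_div, ← Finset.sum_mul]
      field_simp

/-- For a nonnegative vector `v` and a set `S` of `K` indices, the minimum
of `EMD(v, chat)` over all nonnegative vectors `chat` supported on `S` with the same `ℓ₁`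
norm as `v` equals `∑ j, v j * min_{s ∈ S} |j - s|`; moreover it is attained by the vector
assigning to each `s ∈ S` the total mass of the entries of `v` whose nearest element of `S`
is `s` (for any choice `n` of nearest-element assignment). -/
theorem emd_optimal_sparse_approx_on_support {L K : ℕ} (v : Fin L → ℝ) (hv : ∀ l, 0 ≤ v l)
    (S : Finset (Fin L)) (hcard : S.card = K) (hK : 0 < K) :
    IsLeast { x | ∃ chat : Fin L → ℝ, (∀ l, 0 ≤ chat l) ∧ (∀ l, l ∉ S → chat l = 0) ∧
        (∑ l, chat l = ∑ l, v l) ∧ x = EMD v chat }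
      (∑ j, v j * sInf ((fun s : Fin L => |(j : ℝ) - (s : ℝ)|) '' (S : Set (Fin L)))) ∧
    ∀ n : Fin L → Fin L, (∀ j, n j ∈ S) →
      (∀ j : Fin L, ∀ s ∈ S, |(j : ℝ) - ((n j : Fin L) : ℝ)| ≤ |(j : ℝ) - (s : ℝ)|) →
      EMD v (fun l => ∑ j ∈ Finset.univ.filter (fun j => n j = l), v j)
        = ∑ j, v j * sInf ((fun s : Fin L => |(j : ℝ) - (s : ℝ)|) '' (S : Set (Fin L))) := by
  have hSne : S.Nonempty := Finset.card_pos.mp (hcard ▸ hK)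
  set D : Fin L → ℝ :=
    fun j => sInf ((fun s : Fin L => |(j : ℝ) - (s : ℝ)|) '' (S : Set (Fin L))) with hD
  have hfin : ∀ j : Fin L, ((fun s : Fin L => |(j : ℝ) - (s : ℝ)|) '' (S : Set (Fin L))).Finite :=
    fun j => S.finite_toSet.image _
  have hne : ∀ j : Fin L, ((fun s : Fin L => |(j : ℝ) - (s : ℝ)|) '' (S : Set (Fin L))).Nonempty :=
    fun j => (hSne.to_set).image _
  have hDle : ∀ j : Fin L, ∀ s ∈ S, D j ≤ |(j : ℝ) - (s : ℝ)| := by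
    intro j s hs
    exact csInf_le (hfin j).bddBelow ⟨s, hs, rfl⟩
  have hDmem : ∀ j : Fin L, ∃ s ∈ S, D j = |(j : ℝ) - (s : ℝ)| := by
    intro j
    obtain ⟨s, hs, hseq⟩ := (hne j).csInf_mem (hfin j)
    exact ⟨s, hs, hseq.symm⟩
  set T : ℝ := ∑ j, v j * D j with hT
  -- lower bound: T is a lower bound for the feasible costs defining EMD v chat
  have hlb : ∀ chat : Fin L → ℝ, (∀ l, l ∉ S → chat l = 0) →
      T ∈ lowerBounds { x | ∃ f : Fin L → Fin L → ℝ,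
        (∀ i j, 0 ≤ f i j) ∧ (∀ i, ∑ j, f i j = v i) ∧ (∀ j, ∑ i, f i j = chat j) ∧
        x = ∑ i, ∑ j, f i j * |(i : ℝ) - (j : ℝ)| } := by
    intro chat hsupp x hx
    obtain ⟨f, hf0, hfr, hfc, rfl⟩ := hx
    have hzero : ∀ i j : Fin L, j ∉ S → f i j = 0 := by
      intro i j hj
      have hcol : ∑ i, f i j = 0 := by rw [hfc j, hsupp j hj]
      exact (Finset.sum_eq_zero_iff_of_nonneg (fun i _ => hf0 i j)).mp hcol i (Finset.mem_univ i)
    calc T = ∑ i, ∑ j, f i j * D i := by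
            apply Finset.sum_congr rfl
            intro i _
            rw [← Finset.sum_mul, hfr i]
      _ ≤ ∑ i, ∑ j, f i j * |(i : ℝ) - (j : ℝ)| := by
            apply Finset.sum_le_sum
            intro i _
            apply Finset.sum_le_sum
            intro j _
            by_cases hj : j ∈ S
            · exact mul_le_mul_of_nonneg_left (hDle i j hj) (hf0 i j)
            · simp [hzero i j hj]
  have hne' : ∀ chat : Fin L → ℝ, (∀ l, 0 ≤ chat l) → (∑ l, chat l = ∑ l, v l) →
      { x | ∃ f : Fin L → Fin L → ℝ,
        (∀ i j, 0 ≤ f i j) ∧ (∀ i, ∑ j, f i j = v i) ∧ (∀ j, ∑ i, f i j = chat j) ∧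
        x = ∑ i, ∑ j, f i j * |(i : ℝ) - (j : ℝ)| }.Nonempty := by
    intro chat h1 h3
    obtain ⟨f, hf0, hfr, hfc⟩ := flow_exists v chat hv h1 h3.symm
    exact ⟨_, f, hf0, hfr, hfc, rfl⟩
  have hlow : ∀ chat : Fin L → ℝ, (∀ l, 0 ≤ chat l) → (∀ l, l ∉ S → chat l = 0) →
      (∑ l, chat l = ∑ l, v l) → T ≤ EMD v chat := by
    intro chat h1 h2 h3
    exact le_csInf (hne' chat h1 h3) (hlb chat h2)
  -- main equality for a nearest-assignment n
  have hmain : ∀ n : Fin L → Fin L, (∀ j, n j ∈ S) →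
      (∀ j : Fin L, ∀ s ∈ S, |(j : ℝ) - ((n j : Fin L) : ℝ)| ≤ |(j : ℝ) - (s : ℝ)|) →
      EMD v (fun l => ∑ j ∈ Finset.univ.filter (fun j => n j = l), v j) = T := by
    intro n hn1 hn2
    set chat : Fin L → ℝ := fun l => ∑ j ∈ Finset.univ.filter (fun j => n j = l), v j with hchat
    have h1 : ∀ l, 0 ≤ chat l := fun l => Finset.sum_nonneg fun j _ => hv j
    have h2 : ∀ l, l ∉ S → chat l = 0 := by
      intro l hl
      apply Finset.sum_eq_zero
      intro j hj
      exact absurd ((Finset.mem_filter.mp hj).2 ▸ hn1 j) hl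
    have h3 : ∑ l, chat l = ∑ l, v l := by
      rw [hchat]
      exact Finset.sum_fiberwise_of_maps_to (fun j _ => Finset.mem_univ (n j)) v
    have hDeq : ∀ j : Fin L, D j = |(j : ℝ) - ((n j : Fin L) : ℝ)| := by
      intro j
      obtain ⟨s, hs, hseq⟩ := hDmem j
      exact le_antisymm (hDle j (n j) (hn1 j)) (hseq ▸ hn2 j s hs)
    have hmem : T ∈ { x | ∃ f : Fin L → Fin L → ℝ,
        (∀ i j, 0 ≤ f i j) ∧ (∀ i, ∑ j, f i j = v i) ∧ (∀ j, ∑ i, f i j = chat j) ∧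
        x = ∑ i, ∑ j, f i j * |(i : ℝ) - (j : ℝ)| } := by
      refine ⟨fun i j => if n i = j then v i else 0, ?_, ?_, ?_, ?_⟩
      · intro i j
        dsimp only
        split <;> [exact hv i; exact le_refl 0]
      · intro i
        simp
      · intro j
        simp only [hchat, Finset.sum_filter]
      · rw [hT]
        apply Finset.sum_congr rfl
        intro i _
        dsimp only
        simp only [ite_mul, zero_mul, Finset.sum_ite_eq, Finset.mem_univ, if_true]
        rw [hDeq i]
    exact le_antisymm (csInf_le ⟨T, hlb chat h2⟩ hmem) (hlow chat h1 h2 h3)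
  constructor
  · constructor
    · -- membership: construct a nearest assignment via choice
      have hex : ∀ j : Fin L, ∃ s ∈ S, ∀ s' ∈ S, |(j : ℝ) - (s : ℝ)| ≤ |(j : ℝ) - (s' : ℝ)| :=
        fun j => S.exists_min_image (fun s => |(j : ℝ) - (s : ℝ)|) hSne
      choose n hn1 hn2 using hex
      refine ⟨fun l => ∑ j ∈ Finset.univ.filter (fun j => n j = l), v j, ?_, ?_, ?_, ?_⟩
      · exact fun l => Finset.sum_nonneg fun j _ => hv j
      · intro l hl
        apply Finset.sum_eq_zero
        intro j hj
        exact absurd ((Finset.mem_filter.mp hj).2 ▸ hn1 j) hl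
      · exact Finset.sum_fiberwise_of_maps_to (fun j _ => Finset.mem_univ (n j)) v
      · exact (hmain n hn1 hn2).symm
    · rintro x ⟨chat, h1, h2, h3, rfl⟩
      exact hlow chat h1 h2 h3
  · exact hmain
end

section
/- Let v ∈ ℝ^L be a nonnegative vector and K ≥ 1. Then the minimum of EMD(v, ĉ) over all nonnegative vectors ĉ ∈ ℝ^L with at most K nonzero entries and ‖ĉ‖₁ = ‖v‖₁ equals the minimum over all K-element subsets S ⊆ {1, …, L} of the K-median clustering objective ∑_{j=1}^L v_j · min_{s ∈ S} |j − s|; in particular, the support of an EMD-optimal K-sparse approximation to v is a set of K-median centroids for the points {1, …, L} weighted by the entries of v. -/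
open Finset

/-- The `K`-median clustering objective for the points `1, …, L` weighted by the entries
of `v`, with centroid set `S`: `∑ j, v j * min_{s ∈ S} |j - s|`. -/
noncomputable def clusterObj {L : ℕ} (v : Fin L → ℝ) (S : Finset (Fin L)) : ℝ :=
  ∑ j, v j * sInf ((fun s : Fin L => |(j : ℝ) - (s : ℝ)|) '' (S : Set (Fin L)))

/-- The set of achievable values `EMD(v, chat)` over all nonnegative `K`-sparse vectors
`chat` with the same `ℓ₁` norm as `v`. -/
def sparseEMDSet {L : ℕ} (K : ℕ) (v : Fin L → ℝ) : Set ℝ :=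
  { x | ∃ chat : Fin L → ℝ, (∀ l, 0 ≤ chat l) ∧
      (Finset.univ.filter (fun l => chat l ≠ 0)).card ≤ K ∧
      (∑ l, chat l = ∑ l, v l) ∧ x = EMD v chat }

/-- The set of achievable values of the `K`-median clustering objective over all
`K`-element centroid sets `S`. -/
def medianObjSet {L : ℕ} (K : ℕ) (v : Fin L → ℝ) : Set ℝ :=
  { x | ∃ S : Finset (Fin L), S.card = K ∧ x = clusterObj v S }
namespace EMDAux

variable {L : ℕ}

/-- distance from point j to the set S -/
noncomputable def nd (j : Fin L) (S : Finset (Fin L)) : ℝ :=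
  sInf ((fun s : Fin L => |(j : ℝ) - (s : ℝ)|) '' (S : Set (Fin L)))

lemma nd_eq_inf' (j : Fin L) {S : Finset (Fin L)} (hS : S.Nonempty) :
    nd j S = S.inf' hS (fun s => |(j : ℝ) - (s : ℝ)|) := by
  rw [nd, Finset.inf'_eq_csInf_image]

lemma nd_nonneg (j : Fin L) (S : Finset (Fin L)) : 0 ≤ nd j S := by
  apply Real.sInf_nonneg
  rintro x ⟨s, -, rfl⟩
  exact abs_nonneg _

lemma nd_le {j s : Fin L} {S : Finset (Fin L)} (hs : s ∈ S) :
    nd j S ≤ |(j : ℝ) - (s : ℝ)| := by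
  rw [nd_eq_inf' j ⟨s, hs⟩]
  exact Finset.inf'_le _ hs

lemma nd_attained (j : Fin L) {S : Finset (Fin L)} (hS : S.Nonempty) :
    ∃ s ∈ S, nd j S = |(j : ℝ) - (s : ℝ)| := by
  rw [nd_eq_inf' j hS]
  exact Finset.exists_mem_eq_inf' hS _

lemma clusterObj_eq (v : Fin L → ℝ) (S : Finset (Fin L)) :
    clusterObj v S = ∑ j, v j * nd j S := rfl

lemma clusterObj_nonneg (v : Fin L → ℝ) (hv : ∀ l, 0 ≤ v l) (S : Finset (Fin L)) :
    0 ≤ clusterObj v S :=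
  Finset.sum_nonneg fun j _ => mul_nonneg (hv j) (nd_nonneg j S)

lemma EMD_nonneg (u w : Fin L → ℝ) : 0 ≤ EMD u w := by
  apply Real.sInf_nonneg
  rintro x ⟨f, hf0, -, -, rfl⟩
  exact Finset.sum_nonneg fun i _ => Finset.sum_nonneg fun j _ =>
    mul_nonneg (hf0 i j) (abs_nonneg _)

lemma EMD_bddBelow (u w : Fin L → ℝ) :
    BddBelow { x | ∃ f : Fin L → Fin L → ℝ,
      (∀ i j, 0 ≤ f i j) ∧ (∀ i, ∑ j, f i j = u i) ∧ (∀ j, ∑ i, f i j = w j) ∧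
      x = ∑ i, ∑ j, f i j * |(i : ℝ) - (j : ℝ)| } := by
  refine ⟨0, ?_⟩
  rintro x ⟨f, hf0, -, -, rfl⟩
  exact Finset.sum_nonneg fun i _ => Finset.sum_nonneg fun j _ =>
    mul_nonneg (hf0 i j) (abs_nonneg _)

lemma EMD_self (v : Fin L → ℝ) (hv : ∀ l, 0 ≤ v l) : EMD v v = 0 := by
  refine le_antisymm ?_ (EMD_nonneg v v)
  have hmem : (0:ℝ) ∈ {x | ∃ f : Fin L → Fin L → ℝ,
      (∀ i j, 0 ≤ f i j) ∧ (∀ i, ∑ j, f i j = v i) ∧ (∀ j, ∑ i, f i j = v j) ∧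
      x = ∑ i, ∑ j, f i j * |(i : ℝ) - (j : ℝ)|} := by
    refine ⟨fun i j => if i = j then v i else 0, ?_, ?_, ?_, ?_⟩
    · intro i j; by_cases h : i = j <;> simp [h, hv i, hv j]
    · intro i; simp
    · intro j; simp
    · rw [eq_comm]
      apply Finset.sum_eq_zero
      intro i _
      apply Finset.sum_eq_zero
      intro j _
      by_cases h : i = j <;> simp [h]
  exact csInf_le (EMD_bddBelow v v) hmem

lemma flow_exists (u w : Fin L → ℝ) (hu : ∀ i, 0 ≤ u i) (hw : ∀ i, 0 ≤ w i)
    (hsum : ∑ i, w i = ∑ i, u i) :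
    ∃ f : Fin L → Fin L → ℝ, (∀ i j, 0 ≤ f i j) ∧ (∀ i, ∑ j, f i j = u i) ∧
      (∀ j, ∑ i, f i j = w j) := by
  by_cases hT : ∑ i, u i = 0
  · have hu0 : ∀ i, u i = 0 := by
      intro i
      have := (Finset.sum_eq_zero_iff_of_nonneg (fun i _ => hu i)).1 hT
      exact this i (Finset.mem_univ i)
    have hw0 : ∀ i, w i = 0 := by
      intro i
      have := (Finset.sum_eq_zero_iff_of_nonneg (fun i _ => hw i)).1 (hsum.trans hT)
      exact this i (Finset.mem_univ i)
    exact ⟨fun _ _ => 0, fun _ _ => le_refl 0,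
      fun i => by simp [hu0 i], fun j => by simp [hw0 j]⟩
  · refine ⟨fun i j => u i * w j / (∑ i, u i), ?_, ?_, ?_⟩
    · intro i j
      have h0 : 0 ≤ ∑ i, u i := Finset.sum_nonneg fun i _ => hu i
      exact div_nonneg (mul_nonneg (hu i) (hw j)) h0
    · intro i
      rw [← Finset.sum_div, ← Finset.mul_sum, hsum, mul_div_assoc,
        div_self hT, mul_one]
    · intro j
      rw [← Finset.sum_div, ← Finset.sum_mul, mul_comm, mul_div_assoc,
        div_self hT, mul_one]

/-- Lower bound: every admissible flow costs at least the clustering objective. -/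
lemma clusterObj_le_EMD (v chat : Fin L → ℝ) (hv : ∀ l, 0 ≤ v l)
    (hchat : ∀ l, 0 ≤ chat l) (hsum : ∑ l, chat l = ∑ l, v l)
    (S : Finset (Fin L)) (hsupp : ∀ j, chat j ≠ 0 → j ∈ S) :
    clusterObj v S ≤ EMD v chat := by
  obtain ⟨f, hf0, hfr, hfc⟩ := flow_exists v chat hv hchat hsum
  unfold EMD
  refine le_csInf ⟨_, ⟨f, hf0, hfr, hfc, rfl⟩⟩ ?_
  rintro x ⟨g, hg0, hgr, hgc, rfl⟩
  rw [clusterObj_eq]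
  have key : ∀ i j : Fin L, g i j * nd i S ≤ g i j * |(i : ℝ) - (j : ℝ)| := by
    intro i j
    rcases eq_or_lt_of_le (hg0 i j) with h | h
    · rw [← h]; simp
    · have hj : j ∈ S := by
        apply hsupp
        intro hc
        have : ∀ i ∈ Finset.univ, g i j = 0 := by
          have := hgc j
          rw [hc] at this
          exact (Finset.sum_eq_zero_iff_of_nonneg (fun i _ => hg0 i j)).1 this
        exact absurd (this i (Finset.mem_univ i)) (ne_of_gt h)
      exact mul_le_mul_of_nonneg_left (nd_le hj) (hg0 i j)
  calc ∑ i, v i * nd i S = ∑ i, (∑ j, g i j) * nd i S := by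
        simp only [hgr]
    _ = ∑ i, ∑ j, g i j * nd i S := by
        simp only [Finset.sum_mul]
    _ ≤ ∑ i, ∑ j, g i j * |(i : ℝ) - (j : ℝ)| :=
        Finset.sum_le_sum fun i _ => Finset.sum_le_sum fun j _ => key i j

/-- Upper bound: transporting each point to its nearest centroid gives a sparse vector
whose EMD to `v` is at most the clustering objective. -/
lemma exists_chat (v : Fin L → ℝ) (hv : ∀ l, 0 ≤ v l)
    (S : Finset (Fin L)) (hS : S.Nonempty) :
    ∃ chat : Fin L → ℝ, (∀ l, 0 ≤ chat l) ∧ (∀ l, chat l ≠ 0 → l ∈ S) ∧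
      (∑ l, chat l = ∑ l, v l) ∧ EMD v chat ≤ clusterObj v S := by
  have hN : ∀ i : Fin L, ∃ s ∈ S, nd i S = |(i : ℝ) - (s : ℝ)| :=
    fun i => nd_attained i hS
  choose N hNmem hNval using hN
  set chat : Fin L → ℝ := fun l => ∑ i ∈ Finset.univ.filter (fun i => N i = l), v i
    with hchatdef
  have hchat0 : ∀ l, 0 ≤ chat l :=
    fun l => Finset.sum_nonneg fun i _ => hv i
  refine ⟨chat, hchat0, ?_, ?_, ?_⟩
  · intro l hl
    by_contra hls
    apply hl
    apply Finset.sum_eq_zero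
    intro i hi
    rw [Finset.mem_filter] at hi
    exact absurd (hi.2 ▸ hNmem i) hls
  · exact Finset.sum_fiberwise _ _ _
  · set f : Fin L → Fin L → ℝ := fun i j => if N i = j then v i else 0 with hfdef
    have hf0 : ∀ i j, 0 ≤ f i j := by
      intro i j
      simp only [hfdef]
      split <;> [exact hv i; exact le_refl 0]
    have hfr : ∀ i, ∑ j, f i j = v i := by
      intro i
      simp [hfdef]
    have hfc : ∀ j, ∑ i, f i j = chat j := by
      intro j
      show ∑ i, f i j = ∑ i ∈ Finset.univ.filter (fun i => N i = j), v i
      rw [Finset.sum_filter]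
    have hcost : (∑ i, ∑ j, f i j * |(i : ℝ) - (j : ℝ)|) = clusterObj v S := by
      rw [clusterObj_eq]
      apply Finset.sum_congr rfl
      intro i _
      have : ∀ j, f i j * |(i : ℝ) - (j : ℝ)|
          = if N i = j then v i * |(i : ℝ) - (j : ℝ)| else 0 := by
        intro j
        simp only [hfdef]
        split <;> simp
      simp only [this, Finset.sum_ite_eq, Finset.mem_univ, if_true]
      rw [hNval i]
    calc EMD v chat ≤ ∑ i, ∑ j, f i j * |(i : ℝ) - (j : ℝ)| :=
          csInf_le (EMD_bddBelow v chat) ⟨f, hf0, hfr, hfc, rfl⟩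
      _ = clusterObj v S := hcost

end EMDAux

open EMDAux

/-- The minimum of `EMD(v, chat)` over nonnegative vectors `chat` with at
most `K` nonzero entries and `‖chat‖₁ = ‖v‖₁` equals the minimum over all `K`-element
subsets `S` of the `K`-median clustering objective; in particular, the support of an
EMD-optimal `K`-sparse approximation (any `K`-set containing it) minimizes the clustering
objective. -/
theorem emd_sparse_approx_eq_kmedian {L : ℕ} (K : ℕ) (hK : 1 ≤ K)
    (v : Fin L → ℝ) (hv : ∀ l, 0 ≤ v l) :
    sInf (sparseEMDSet K v) = sInf (medianObjSet K v) ∧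
    ∀ chat : Fin L → ℝ, (∀ l, 0 ≤ chat l) →
      (Finset.univ.filter (fun l => chat l ≠ 0)).card ≤ K →
      (∑ l, chat l = ∑ l, v l) →
      EMD v chat = sInf (sparseEMDSet K v) →
      ∀ S : Finset (Fin L), S.card = K →
        (Finset.univ.filter (fun l => chat l ≠ 0)) ⊆ S →
        clusterObj v S = sInf (medianObjSet K v) := by
  -- lower bounds for the two sets
  have hsplb : ∀ x ∈ sparseEMDSet K v, (0:ℝ) ≤ x := by
    rintro x ⟨chat, -, -, -, rfl⟩
    exact EMD_nonneg v chat
  have hmedlb : ∀ x ∈ medianObjSet K v, (0:ℝ) ≤ x := by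
    rintro x ⟨S, -, rfl⟩
    exact clusterObj_nonneg v hv S
  have main : sInf (sparseEMDSet K v) = sInf (medianObjSet K v) := by
    by_cases hKL : K ≤ L
    · -- both sets are nonempty
      obtain ⟨S₀, -, hS₀card⟩ := Finset.exists_subset_card_eq (s := (Finset.univ : Finset (Fin L))) (n := K)
        (by simpa using hKL)
      have hS₀ne : S₀.Nonempty := Finset.card_pos.1 (hS₀card ▸ hK)
      obtain ⟨c₀, hc₀0, hc₀supp, hc₀sum, hc₀le⟩ := exists_chat v hv S₀ hS₀ne
      have hc₀mem : EMD v c₀ ∈ sparseEMDSet K v := by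
        refine ⟨c₀, hc₀0, ?_, hc₀sum, rfl⟩
        calc (Finset.univ.filter (fun l => c₀ l ≠ 0)).card
            ≤ S₀.card := Finset.card_le_card (fun l hl => hc₀supp l (Finset.mem_filter.1 hl).2)
          _ = K := hS₀card
      have hspne : (sparseEMDSet K v).Nonempty := ⟨_, hc₀mem⟩
      have hmedne : (medianObjSet K v).Nonempty := ⟨_, S₀, hS₀card, rfl⟩
      apply le_antisymm
      · apply le_csInf hmedne
        rintro x ⟨S, hScard, rfl⟩
        have hSne : S.Nonempty := Finset.card_pos.1 (hScard ▸ hK)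
        obtain ⟨c, hc0, hcsupp, hcsum, hcle⟩ := exists_chat v hv S hSne
        have hcmem : EMD v c ∈ sparseEMDSet K v := by
          refine ⟨c, hc0, ?_, hcsum, rfl⟩
          calc (Finset.univ.filter (fun l => c l ≠ 0)).card
              ≤ S.card := Finset.card_le_card (fun l hl => hcsupp l (Finset.mem_filter.1 hl).2)
            _ = K := hScard
        exact le_trans (csInf_le ⟨0, hsplb⟩ hcmem) hcle
      · apply le_csInf hspne
        rintro x ⟨chat, hchat0, hchatcard, hchatsum, rfl⟩
        obtain ⟨S, hsub, hScard⟩ := Finset.exists_superset_card_eq hchatcard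
          (by simpa using hKL)
        have hle : clusterObj v S ≤ EMD v chat := by
          apply clusterObj_le_EMD v chat hv hchat0 hchatsum S
          intro j hj
          exact hsub (Finset.mem_filter.2 ⟨Finset.mem_univ j, hj⟩)
        exact le_trans (csInf_le ⟨0, hmedlb⟩ ⟨S, hScard, rfl⟩) hle
    · -- K > L : median set is empty, both infima are 0
      have hmed : medianObjSet K v = ∅ := by
        ext x
        simp only [medianObjSet, Set.mem_setOf_eq, Set.mem_empty_iff_false, iff_false]
        rintro ⟨S, hScard, -⟩
        exact hKL (hScard ▸ (by simpa using S.card_le_univ))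
      have hvmem : (0:ℝ) ∈ sparseEMDSet K v := by
        refine ⟨v, hv, ?_, rfl, ?_⟩
        · calc (Finset.univ.filter (fun l => v l ≠ 0)).card
              ≤ (Finset.univ : Finset (Fin L)).card := Finset.card_le_card (Finset.filter_subset _ _)
            _ = L := by simp
            _ ≤ K := le_of_not_ge hKL
        · exact (EMD_self v hv).symm
      rw [hmed, Real.sInf_empty]
      exact le_antisymm (csInf_le ⟨0, hsplb⟩ hvmem) (le_csInf ⟨0, hvmem⟩ hsplb)
  refine ⟨main, ?_⟩
  intro chat hchat0 hchatcard hchatsum hopt S hScard hsub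
  have hle : clusterObj v S ≤ EMD v chat := by
    apply clusterObj_le_EMD v chat hv hchat0 hchatsum S
    intro j hj
    exact hsub (Finset.mem_filter.2 ⟨Finset.mem_univ j, hj⟩)
  have h1 : clusterObj v S ≤ sInf (medianObjSet K v) := by
    rw [← main, ← hopt]; exact hle
  exact le_antisymm (hle.trans (hopt.trans main).le)
    (csInf_le ⟨0, hmedlb⟩ ⟨S, hScard, rfl⟩)
end

section
/- Let λ : ℝ → [0, ∞) be integrable and even with cumulative function Λ and Λ(∞) = ∫_ℝ λ. Let θ₁ < θ₂ < … < θ_K with θ_{i+1} − θ_i ≥ ζ for all i, let c₁, …, c_K > 0 satisfy c_i/c_j ≤ r for all i, j, and let v(ω) = ∑_{i=1}^K c_i λ(ω − θ_i). Let θ̂₁ < θ̂₂ < … < θ̂_K satisfy |θ̂_i − θ_i| ≤ e for all i. Fix k with 2 ≤ k ≤ K−1 and suppose the balance condition ∫_{(θ̂_{k−1}+θ̂_k)/2}^{θ̂_k} v(ω) dω = ∫_{θ̂_k}^{(θ̂_k+θ̂_{k+1})/2} v(ω) dω holds. Then 2·Λ(θ̂_k − θ_k) ≥ (2(K−1)r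 + 1)·Λ(ζ/2 − e) − 2(K−1)r·Λ(∞). -/
open MeasureTheory Finset

noncomputable def cumul (lam : ℝ → ℝ) (x : ℝ) : ℝ := ∫ ω in Set.Iic x, lam ω

section aux
variable {lam : ℝ → ℝ}

lemma cumul_mono (hnn : ∀ ω, 0 ≤ lam ω) (hint : Integrable lam) {a b : ℝ} (hab : a ≤ b) :
    cumul lam a ≤ cumul lam b :=
  setIntegral_mono_set hint.integrableOn (Filter.Eventually.of_forall hnn)
    (HasSubset.Subset.eventuallyLE (Set.Iic_subset_Iic.2 hab))

lemma cumul_nonneg (hnn : ∀ ω, 0 ≤ lam ω) (x : ℝ) : 0 ≤ cumul lam x :=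
  setIntegral_nonneg measurableSet_Iic fun ω _ => hnn ω

lemma cumul_le_total (hnn : ∀ ω, 0 ≤ lam ω) (hint : Integrable lam) (x : ℝ) :
    cumul lam x ≤ ∫ ω, lam ω :=
  setIntegral_le_integral hint (Filter.Eventually.of_forall hnn)

lemma cumul_neg (heven : ∀ ω, lam (-ω) = lam ω) (hint : Integrable lam) (x : ℝ) :
    cumul lam (-x) = (∫ ω, lam ω) - cumul lam x := by
  have h1 : cumul lam (-x) = ∫ ω in Set.Ioi x, lam ω := by
    unfold cumul
    rw [show (∫ ω in Set.Iic (-x), lam ω) = ∫ ω in Set.Iic (-x), lam (-ω) by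
      simp_rw [heven]]
    rw [integral_comp_neg_Iic, neg_neg]
  rw [h1, eq_sub_iff_add_eq, add_comm]
  exact intervalIntegral.integral_Iic_add_Ioi hint.integrableOn hint.integrableOn

lemma cumul_interval (hint : Integrable lam) (θ a b : ℝ) :
    (∫ ω in a..b, lam (ω - θ)) = cumul lam (b - θ) - cumul lam (a - θ) := by
  rw [intervalIntegral.integral_comp_sub_right lam θ,
    ← intervalIntegral.integral_Iic_sub_Iic hint.integrableOn hint.integrableOn]
  rfl

end aux

set_option maxHeartbeats 1000000 in
/-- Lower bound for middle clusters: under the separation, dynamic range,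
and accuracy hypotheses, if the `K`-median balance condition holds around the `k`-th
estimate (`2 ≤ k ≤ K - 1`) for the proxy `v(ω) = ∑ i, c i * λ(ω - θ i)`, then
`2·Λ(θh k - θ k) ≥ (2(K-1)r + 1)·Λ(ζ/2 - e) - 2(K-1)r·Λ(∞)`. -/
theorem middle_cluster_lower_bound (lam : ℝ → ℝ)
    (hnn : ∀ ω, 0 ≤ lam ω) (hint : Integrable lam) (heven : ∀ ω, lam (-ω) = lam ω)
    (K : ℕ) (θ θh c : ℕ → ℝ) (ζ r e : ℝ)
    (hmono : ∀ i, 1 ≤ i → i < K → θ i < θ (i + 1))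
    (hsep : ∀ i, 1 ≤ i → i < K → ζ ≤ θ (i + 1) - θ i)
    (hc : ∀ i, 1 ≤ i → i ≤ K → 0 < c i)
    (hr : ∀ i j, 1 ≤ i → i ≤ K → 1 ≤ j → j ≤ K → c i / c j ≤ r)
    (hhmono : ∀ i, 1 ≤ i → i < K → θh i < θh (i + 1))
    (he : ∀ i, 1 ≤ i → i ≤ K → |θh i - θ i| ≤ e)
    (k : ℕ) (hk1 : 2 ≤ k) (hk2 : k + 1 ≤ K)
    (hbal : (∫ ω in ((θh (k - 1) + θh k) / 2)..(θh k),
        ∑ i ∈ Finset.Icc 1 K, c i * lam (ω - θ i)) =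
      ∫ ω in (θh k)..((θh k + θh (k + 1)) / 2),
        ∑ i ∈ Finset.Icc 1 K, c i * lam (ω - θ i)) :
    2 * cumul lam (θh k - θ k) ≥
      (2 * ((K : ℝ) - 1) * r + 1) * cumul lam (ζ / 2 - e)
        - 2 * ((K : ℝ) - 1) * r * (∫ ω, lam ω) := by
  set T := ∫ ω, lam ω with hT
  set s := ζ / 2 - e with hs
  set Λ := cumul lam with hΛ
  have hK3 : 3 ≤ K := by omega
  have hKR : (3 : ℝ) ≤ (K : ℝ) := by exact_mod_cast hK3
  have he0 : 0 ≤ e := (abs_nonneg _).trans (he 1 le_rfl (by omega))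
  have hr1 : (1 : ℝ) ≤ r := by
    have h := hr 1 1 le_rfl (by omega) le_rfl (by omega)
    rwa [div_self (hc 1 le_rfl (by omega)).ne'] at h
  have hΛmono : ∀ {a b : ℝ}, a ≤ b → Λ a ≤ Λ b := fun hab => cumul_mono hnn hint hab
  have hΛ0 : ∀ x, 0 ≤ Λ x := cumul_nonneg hnn
  have hΛT : ∀ x, Λ x ≤ T := cumul_le_total hnn hint
  have hΛneg : ∀ x, Λ (-x) = T - Λ x := cumul_neg heven hint
  -- case s ≤ 0 : crude bound
  rcases le_or_gt s 0 with hs0 | hs0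
  · have h1 : Λ s ≤ T - Λ s := by
      have := hΛmono (show s ≤ -s by linarith)
      rw [hΛneg] at this; linarith
    have h2 : 0 ≤ Λ (θh k - θ k) := hΛ0 _
    have h3 : 0 ≤ Λ s := hΛ0 _
    have hM2 : 2 ≤ ((K:ℝ) - 1) * r := by
      nlinarith [mul_nonneg (show (0:ℝ) ≤ (K:ℝ) - 1 by linarith)
        (show (0:ℝ) ≤ r - 1 by linarith)]
    linarith [mul_nonneg (show (0:ℝ) ≤ ((K:ℝ) - 1) * r by linarith) h3,
      mul_nonneg (show (0:ℝ) ≤ ((K:ℝ) - 1) * r by linarith)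
        (show (0:ℝ) ≤ T - 2 * Λ s by linarith),
      mul_nonneg (show (0:ℝ) ≤ ((K:ℝ) - 1) * r - 2 by linarith) h3]
  -- main case : s > 0, so ζ > 0
  have hζ0 : 0 < ζ := by simp only [hs] at hs0; linarith
  have θle : ∀ i j, 1 ≤ i → i ≤ j → j ≤ K → θ i ≤ θ j := by
    intro i j h1 hij hjK
    induction j with
    | zero => omega
    | succ n ih =>
      rcases Nat.lt_or_ge i (n + 1) with h | h
      · have h1n : θ i ≤ θ n := ih (by omega) (by omega)
        have := hmono n (by omega) (by omega)
        linarith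
      · have : i = n + 1 := by omega
        simp [this]
  have hk1n : (k - 1) + 1 = k := by omega
  set A := (θh (k - 1) + θh k) / 2 with hA
  set B := (θh k + θh (k + 1)) / 2 with hB
  have hhk1 : θh (k - 1) < θh k := by
    have := hhmono (k - 1) (by omega) (by omega); rwa [hk1n] at this
  have hhk2 : θh k < θh (k + 1) := hhmono k (by omega) (by omega)
  have hAk : A ≤ θh k := by rw [hA]; linarith
  have hkB : θh k ≤ B := by rw [hB]; linarith
  -- rewrite the balance condition
  have hrw : ∀ a b : ℝ, (∫ ω in a..b, ∑ i ∈ Finset.Icc 1 K, c i * lam (ω - θ i))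
      = ∑ i ∈ Finset.Icc 1 K, c i * (Λ (b - θ i) - Λ (a - θ i)) := by
    intro a b
    rw [intervalIntegral.integral_finset_sum (fun i _ =>
      (((hint.comp_sub_right (θ i)).const_mul (c i)).intervalIntegrable))]
    refine Finset.sum_congr rfl fun i _ => ?_
    rw [intervalIntegral.integral_const_mul, cumul_interval hint]
  rw [hrw, hrw] at hbal
  have hkmem : k ∈ Finset.Icc 1 K := by simp; omega
  rw [← Finset.add_sum_erase _ _ hkmem, ← Finset.add_sum_erase _ _ hkmem] at hbal
  set S := (Finset.Icc 1 K).erase k with hS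
  have hcard : (S.card : ℝ) = (K : ℝ) - 1 := by
    rw [hS, Finset.card_erase_of_mem hkmem, Nat.card_Icc]
    have : K + 1 - 1 - 1 = K - 1 := by omega
    rw [this, Nat.cast_sub (by omega)]
    simp
  have hck : 0 < c k := hc k (by omega) (by omega)
  have hTs : Λ s ≤ T := hΛT s
  -- bound on the left-side error sum
  have hsumle : ∑ i ∈ S, c i * (Λ (θh k - θ i) - Λ (A - θ i))
      ≤ ((K : ℝ) - 1) * (r * c k * (T - Λ s)) := by
    have hterm : ∀ i ∈ S, c i * (Λ (θh k - θ i) - Λ (A - θ i))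
        ≤ r * c k * (T - Λ s) := by
      intro i hi
      rw [hS, Finset.mem_erase, Finset.mem_Icc] at hi
      obtain ⟨hik, hi1, hiK⟩ := hi
      have hcle : c i ≤ r * c k := by
        have h := hr i k hi1 hiK (by omega) (by omega)
        rwa [div_le_iff₀ hck] at h
      have hD0 : 0 ≤ Λ (θh k - θ i) - Λ (A - θ i) :=
        sub_nonneg.2 (hΛmono (by linarith))
      have hD : Λ (θh k - θ i) - Λ (A - θ i) ≤ T - Λ s := by
        rcases Nat.lt_or_ge i k with hik' | hik'
        · -- i ≤ k - 1 : A - θ i ≥ s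
          have hsep' : ζ ≤ θ k - θ (k - 1) := by
            have := hsep (k - 1) (by omega) (by omega); rwa [hk1n] at this
          have hθi : θ i ≤ θ (k - 1) := θle i (k - 1) hi1 (by omega) (by omega)
          have he1 : θ (k - 1) - e ≤ θh (k - 1) := by
            have := abs_le.1 (he (k - 1) (by omega) (by omega)); linarith [this.1]
          have he2 : θ k - e ≤ θh k := by
            have := abs_le.1 (he k (by omega) (by omega)); linarith [this.1]
          have hAs : s ≤ A - θ i := by rw [hA, hs]; linarith
          have := hΛmono hAs
          have := hΛT (θh k - θ i)
          linarith
        · -- i ≥ k + 1 : θh k - θ i ≤ -s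
          have hsep' : ζ ≤ θ (k + 1) - θ k := hsep k (by omega) (by omega)
          have hθi : θ (k + 1) ≤ θ i := θle (k + 1) i (by omega) (by omega) hiK
          have he2 : θh k ≤ θ k + e := by
            have := abs_le.1 (he k (by omega) (by omega)); linarith [this.2]
          have hneg : θh k - θ i ≤ -s := by rw [hs]; linarith
          have h1 : Λ (θh k - θ i) ≤ Λ (-s) := hΛmono hneg
          rw [hΛneg] at h1
          have := hΛ0 (A - θ i)
          linarith
      calc c i * (Λ (θh k - θ i) - Λ (A - θ i))
          ≤ (r * c k) * (T - Λ s) :=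
            mul_le_mul hcle hD hD0 (by positivity)
      _ = r * c k * (T - Λ s) := by ring
    calc ∑ i ∈ S, c i * (Λ (θh k - θ i) - Λ (A - θ i))
        ≤ ∑ _i ∈ S, r * c k * (T - Λ s) := Finset.sum_le_sum hterm
      _ = (S.card : ℝ) * (r * c k * (T - Λ s)) := by
          rw [Finset.sum_const, nsmul_eq_mul]
      _ = ((K : ℝ) - 1) * (r * c k * (T - Λ s)) := by rw [hcard]
  -- the right-side error sum is nonnegative
  have hsumge : 0 ≤ ∑ i ∈ S, c i * (Λ (B - θ i) - Λ (θh k - θ i)) := by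
    refine Finset.sum_nonneg fun i hi => ?_
    rw [hS, Finset.mem_erase, Finset.mem_Icc] at hi
    exact mul_nonneg (hc i hi.2.1 hi.2.2).le
      (sub_nonneg.2 (hΛmono (by linarith)))
  -- bounds on the center terms
  have hBk : Λ s ≤ Λ (B - θ k) := by
    apply hΛmono
    have hsep' : ζ ≤ θ (k + 1) - θ k := hsep k (by omega) (by omega)
    have he2 : θ k - e ≤ θh k := by
      have := abs_le.1 (he k (by omega) (by omega)); linarith [this.1]
    have he3 : θ (k + 1) - e ≤ θh (k + 1) := by
      have := abs_le.1 (he (k + 1) (by omega) (by omega)); linarith [this.1]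
    rw [hB, hs]; linarith
  have hAk0 : 0 ≤ Λ (A - θ k) := hΛ0 _
  -- combine
  have hkey : 2 * (c k * Λ (θh k - θ k)) ≥
      c k * Λ s - ((K : ℝ) - 1) * (r * c k * (T - Λ s)) := by
    have h5 := mul_le_mul_of_nonneg_left hBk hck.le
    have h6 := mul_nonneg hck.le hAk0
    linarith [hbal, hsumle, hsumge]
  have hM0 : 0 ≤ ((K : ℝ) - 1) * r :=
    mul_nonneg (by linarith) (by linarith)
  have hfin : 0 ≤ ((K : ℝ) - 1) * r * (T - Λ s) :=
    mul_nonneg hM0 (by linarith)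
  rw [ge_iff_le, ← mul_le_mul_iff_right₀ hck]
  linarith [hkey, mul_nonneg hck.le hfin]
end

section
/- Let λ : ℝ → [0, ∞) be integrable and even with cumulative function Λ and Λ(∞) = ∫_ℝ λ. Let θ₁ < θ₂ < … < θ_K with θ_{i+1} − θ_i ≥ ζ for all i, let c₁, …, c_K > 0 satisfy c_i/c_j ≤ r for all i, j, and let v(ω) = ∑_{i=1}^K c_i λ(ω − θ_i). Let θ̂₁ < θ̂₂ < … < θ̂_K satisfy |θ̂_i − θ_i| ≤ e for all i. Fix k with 2 ≤ k ≤ K−1 and suppose the balance condition ∫_{(θ̂_{k−1}+θ̂_k)/2}^{θ̂_k} v(ω) dω = ∫_{θ̂_k}^{(θ̂_k+θ̂_{k+1})/2} v(ω) dω holds. Then 2·Λ(θ̂_k − θ_k) ≤ (2(K−1)r + 2)·Λ(∞) − (2(K−1)r + 1)·Λ(ζ/2 − e). -/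
open MeasureTheory Finset

set_option maxHeartbeats 1000000 in
/-- Upper bound for middle clusters: under the separation, dynamic range,
and accuracy hypotheses, if the `K`-median balance condition holds around the `k`-th
estimate (`2 ≤ k ≤ K - 1`) for the proxy `v(ω) = ∑ i, c i * λ(ω - θ i)`, then
`2·Λ(θh k - θ k) ≤ (2(K-1)r + 2)·Λ(∞) - (2(K-1)r + 1)·Λ(ζ/2 - e)`. -/
theorem middle_cluster_upper_bound (lam : ℝ → ℝ)
    (hnn : ∀ ω, 0 ≤ lam ω) (hint : Integrable lam) (heven : ∀ ω, lam (-ω) = lam ω)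
    (K : ℕ) (θ θh c : ℕ → ℝ) (ζ r e : ℝ)
    (hmono : ∀ i, 1 ≤ i → i < K → θ i < θ (i + 1))
    (hsep : ∀ i, 1 ≤ i → i < K → ζ ≤ θ (i + 1) - θ i)
    (hc : ∀ i, 1 ≤ i → i ≤ K → 0 < c i)
    (hr : ∀ i j, 1 ≤ i → i ≤ K → 1 ≤ j → j ≤ K → c i / c j ≤ r)
    (hhmono : ∀ i, 1 ≤ i → i < K → θh i < θh (i + 1))
    (he : ∀ i, 1 ≤ i → i ≤ K → |θh i - θ i| ≤ e)
    (k : ℕ) (hk1 : 2 ≤ k) (hk2 : k + 1 ≤ K)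
    (hbal : (∫ ω in ((θh (k - 1) + θh k) / 2)..(θh k),
        ∑ i ∈ Finset.Icc 1 K, c i * lam (ω - θ i)) =
      ∫ ω in (θh k)..((θh k + θh (k + 1)) / 2),
        ∑ i ∈ Finset.Icc 1 K, c i * lam (ω - θ i)) :
    2 * cumul lam (θh k - θ k) ≤
      (2 * ((K : ℝ) - 1) * r + 2) * (∫ ω, lam ω)
        - (2 * ((K : ℝ) - 1) * r + 1) * cumul lam (ζ / 2 - e) := by
  classical
  set I : ℝ := ∫ ω, lam ω with hI
  -- basic facts about cumul
  have hIOn : ∀ s : Set ℝ, IntegrableOn lam s := fun s => hint.integrableOn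
  have hΛmono : ∀ x y : ℝ, x ≤ y → cumul lam x ≤ cumul lam y := by
    intro x y hxy
    exact setIntegral_mono_set (hIOn _) (Filter.Eventually.of_forall hnn)
      ((Set.Iic_subset_Iic.2 hxy).eventuallyLE)
  have hΛle : ∀ x : ℝ, cumul lam x ≤ I :=
    fun x => setIntegral_le_integral hint (Filter.Eventually.of_forall hnn)
  have hΛnn : ∀ x : ℝ, 0 ≤ cumul lam x :=
    fun x => setIntegral_nonneg measurableSet_Iic (fun ω _ => hnn ω)
  have hΛneg : ∀ x : ℝ, cumul lam (-x) = I - cumul lam x := by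
    intro x
    have h1 : cumul lam (-x) = ∫ ω in Set.Ioi x, lam ω := by
      have h := integral_comp_neg_Iic (-x) lam
      rw [neg_neg] at h
      calc cumul lam (-x) = ∫ ω in Set.Iic (-x), lam (-ω) := by
            simp only [heven]; rfl
        _ = _ := h
    have h2 : cumul lam x + (∫ ω in Set.Ioi x, lam ω) = I :=
      intervalIntegral.integral_Iic_add_Ioi (b := x) (hIOn _) (hIOn _)
    linarith [h1, h2]
  -- integrability of shifted terms
  have hInt : ∀ d : ℝ, Integrable (fun ω => lam (ω - d)) := fun d => hint.comp_sub_right d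
  have hIntc : ∀ (i : ℕ) (a b : ℝ),
      IntervalIntegrable (fun ω => c i * lam (ω - θ i)) volume a b :=
    fun i a b => (((hInt (θ i)).const_mul (c i)).intervalIntegrable)
  have hIntv : ∀ a b : ℝ, IntervalIntegrable
      (fun ω => ∑ i ∈ Finset.Icc 1 K, c i * lam (ω - θ i)) volume a b := by
    intro a b
    have : Integrable (fun ω => ∑ i ∈ Finset.Icc 1 K, c i * lam (ω - θ i)) :=
      integrable_finset_sum _ (fun i _ => (hInt (θ i)).const_mul (c i))
    exact this.intervalIntegrable
  -- interval integral of a shifted lam in terms of cumul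
  have hshift : ∀ a b d : ℝ, (∫ ω in a..b, lam (ω - d)) =
      cumul lam (b - d) - cumul lam (a - d) := by
    intro a b d
    rw [intervalIntegral.integral_comp_sub_right (fun x => lam x) d,
      ← intervalIntegral.integral_Iic_sub_Iic (hIOn _) (hIOn _)]
    rfl
  -- index facts
  have hk1' : k - 1 + 1 = k := by omega
  have hθle : ∀ i j : ℕ, 1 ≤ i → i ≤ j → j ≤ K → θ i ≤ θ j := by
    intro i j h1 hij hjK
    induction j, hij using Nat.le_induction with
    | base => exact le_rfl
    | succ n hn ih =>
      have h2 := hmono n (h1.trans hn) (by omega)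
      have h3 := ih (by omega)
      linarith
  have hmk := hmono (k - 1) (by omega) (by omega)
  have hsk := hsep (k - 1) (by omega) (by omega)
  rw [hk1'] at hmk hsk
  have hmk2 := hmono k (by omega) (by omega)
  have hsk2 := hsep k (by omega) (by omega)
  have hhk := hhmono (k - 1) (by omega) (by omega)
  rw [hk1'] at hhk
  have hhk2 := hhmono k (by omega) (by omega)
  have hek1 := abs_le.1 (he (k - 1) (by omega) (by omega))
  have hek := abs_le.1 (he k (by omega) (by omega))
  have hek2 := abs_le.1 (he (k + 1) (by omega) (by omega))
  -- notation
  set mL : ℝ := (θh (k - 1) + θh k) / 2 with hmL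
  set mR : ℝ := (θh k + θh (k + 1)) / 2 with hmR
  set L2 : ℝ := cumul lam (ζ / 2 - e) with hL2
  set Λδ : ℝ := cumul lam (θh k - θ k) with hΛδ
  have hmLlt : mL ≤ θh k := by rw [hmL]; linarith
  have hmRgt : θh k ≤ mR := by rw [hmR]; linarith
  -- geometric bounds
  have hmLb : mL - θ k ≤ -(ζ / 2 - e) := by rw [hmL]; linarith
  have hkmem : k ∈ Finset.Icc 1 K := by simp; omega
  -- lower bound on left integral
  have hL : c k * (Λδ - cumul lam (mL - θ k)) ≤
      ∫ ω in mL..(θh k), ∑ i ∈ Finset.Icc 1 K, c i * lam (ω - θ i) := by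
    have h1 : c k * (Λδ - cumul lam (mL - θ k)) =
        ∫ ω in mL..(θh k), c k * lam (ω - θ k) := by
      rw [intervalIntegral.integral_const_mul, hshift, hΛδ, mul_sub]
    rw [h1]
    refine intervalIntegral.integral_mono_on hmLlt (hIntc k _ _) (hIntv _ _) ?_
    intro x _
    exact Finset.single_le_sum (f := fun i => c i * lam (x - θ i))
      (fun i hi => by
        simp only [Finset.mem_Icc] at hi
        exact mul_nonneg (hc i hi.1 hi.2).le (hnn _)) hkmem
  -- upper bound on right integral
  have hR : (∫ ω in (θh k)..mR, ∑ i ∈ Finset.Icc 1 K, c i * lam (ω - θ i)) ≤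
      c k * (I - Λδ) + (∑ i ∈ (Finset.Icc 1 K).erase k, c i) * (I - L2) := by
    rw [intervalIntegral.integral_finset_sum (fun i _ => hIntc i _ _)]
    rw [← Finset.add_sum_erase _ _ hkmem]
    have hterm_k : (∫ ω in (θh k)..mR, c k * lam (ω - θ k)) ≤ c k * (I - Λδ) := by
      rw [intervalIntegral.integral_const_mul, hshift]
      have := hΛle (mR - θ k)
      have := hc k (by omega) (by omega)
      nlinarith
    have hterm_i : ∀ i ∈ (Finset.Icc 1 K).erase k,
        (∫ ω in (θh k)..mR, c i * lam (ω - θ i)) ≤ c i * (I - L2) := by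
      intro i hi
      simp only [Finset.mem_erase, Finset.mem_Icc] at hi
      obtain ⟨hik, hi1, hiK⟩ := hi
      rw [intervalIntegral.integral_const_mul, hshift]
      have hci := (hc i hi1 hiK).le
      rcases lt_or_gt_of_ne hik with hlt | hgt
      · -- i < k : cumul lam (θh k - θ i) ≥ L2
        have h1 : θ i ≤ θ (k - 1) := by
          rcases eq_or_lt_of_le (by omega : i ≤ k - 1) with h | h
          · rw [h]
          · exact hθle i (k - 1) hi1 (by omega) (by omega)
        have h2 : ζ / 2 - e ≤ θh k - θ i := by
          rcases le_or_gt 0 ζ with h | h <;> linarith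
        have h3 := hΛmono _ _ h2
        have h4 := hΛle (mR - θ i)
        rw [← hL2] at h3
        nlinarith
      · -- i > k : cumul lam (mR - θ i) ≤ I - L2
        have h1 : θ (k + 1) ≤ θ i := hθle (k + 1) i (by omega) (by omega) hiK
        have h2 : mR - θ i ≤ -(ζ / 2 - e) := by rw [hmR]; linarith
        have h3 := hΛmono _ _ h2
        rw [hΛneg (ζ / 2 - e), ← hL2] at h3
        have h4 := hΛnn (θh k - θ i)
        nlinarith
    calc (∫ ω in (θh k)..mR, c k * lam (ω - θ k)) +
          ∑ i ∈ (Finset.Icc 1 K).erase k, ∫ ω in (θh k)..mR, c i * lam (ω - θ i)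
        ≤ c k * (I - Λδ) + ∑ i ∈ (Finset.Icc 1 K).erase k, c i * (I - L2) := by
          exact add_le_add hterm_k (Finset.sum_le_sum hterm_i)
      _ = c k * (I - Λδ) + (∑ i ∈ (Finset.Icc 1 K).erase k, c i) * (I - L2) := by
          rw [Finset.sum_mul]
  -- combine via balance
  have hmain : c k * (Λδ - cumul lam (mL - θ k)) ≤
      c k * (I - Λδ) + (∑ i ∈ (Finset.Icc 1 K).erase k, c i) * (I - L2) := by
    calc c k * (Λδ - cumul lam (mL - θ k))
        ≤ ∫ ω in mL..(θh k), ∑ i ∈ Finset.Icc 1 K, c i * lam (ω - θ i) := hL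
      _ = ∫ ω in (θh k)..mR, ∑ i ∈ Finset.Icc 1 K, c i * lam (ω - θ i) := hbal
      _ ≤ _ := hR
  -- bound cumul lam (mL - θ k)
  have hmL2 : cumul lam (mL - θ k) ≤ I - L2 := by
    have h3 := hΛmono _ _ hmLb
    rwa [hΛneg (ζ / 2 - e), ← hL2] at h3
  -- bound the sum of c i over erase
  have hck := hc k (by omega) (by omega)
  have hS : (∑ i ∈ (Finset.Icc 1 K).erase k, c i) ≤ ((K : ℝ) - 1) * (r * c k) := by
    have hcard : ((Finset.Icc 1 K).erase k).card = K - 1 := by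
      rw [Finset.card_erase_of_mem hkmem, Nat.card_Icc]
      omega
    have hbd : ∀ i ∈ (Finset.Icc 1 K).erase k, c i ≤ r * c k := by
      intro i hi
      simp only [Finset.mem_erase, Finset.mem_Icc] at hi
      have := hr i k hi.2.1 hi.2.2 (by omega) (by omega)
      rwa [div_le_iff₀ hck] at this
    calc (∑ i ∈ (Finset.Icc 1 K).erase k, c i)
        ≤ ((Finset.Icc 1 K).erase k).card • (r * c k) := Finset.sum_le_card_nsmul _ _ _ hbd
      _ = ((K : ℝ) - 1) * (r * c k) := by
          rw [hcard, nsmul_eq_mul, Nat.cast_sub (by omega : 1 ≤ K), Nat.cast_one]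
  -- r ≥ 1
  have hr1 : (1 : ℝ) ≤ r := by
    have := hr k k (by omega) (by omega) (by omega) (by omega)
    rwa [div_self hck.ne'] at this
  have hK3 : (3 : ℝ) ≤ (K : ℝ) := by exact_mod_cast (by omega : 3 ≤ K)
  have hIL2 : 0 ≤ I - L2 := by have := hΛle (ζ / 2 - e); rw [← hL2] at this; linarith
  -- put it together
  have hSIL2 : (∑ i ∈ (Finset.Icc 1 K).erase k, c i) * (I - L2) ≤
      ((K : ℝ) - 1) * (r * c k) * (I - L2) := by
    have hSnn : 0 ≤ ∑ i ∈ (Finset.Icc 1 K).erase k, c i :=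
      Finset.sum_nonneg (fun i hi => by
        simp only [Finset.mem_erase, Finset.mem_Icc] at hi
        exact (hc i hi.2.1 hi.2.2).le)
    exact mul_le_mul_of_nonneg_right hS hIL2
  have h5 : c k * cumul lam (mL - θ k) ≤ c k * (I - L2) :=
    mul_le_mul_of_nonneg_left hmL2 hck.le
  have hkey : c k * (2 * Λδ) ≤ c k * (I + (1 + ((K : ℝ) - 1) * r) * (I - L2)) := by
    linarith [hmain, h5, hSIL2]
  have hfin : 2 * Λδ ≤ I + (1 + ((K : ℝ) - 1) * r) * (I - L2) :=
    le_of_mul_le_mul_left hkey hck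
  have hA : (0 : ℝ) ≤ ((K : ℝ) - 1) * r := by nlinarith
  nlinarith [mul_nonneg hA hIL2, hfin]
end

section
/- Let λ : ℝ → [0, ∞) be integrable and even with cumulative function Λ and Λ(∞) = ∫_ℝ λ. Let θ_min < θ₁ < θ₂ < … < θ_K with θ_{i+1} − θ_i ≥ ζ for all i and θ₁ − θ_min ≥ ε, let c₁, …, c_K > 0 satisfy c_i/c_j ≤ r for all i, j, and let v(ω) = ∑_{i=1}^K c_i λ(ω − θ_i). Let θ̂₁ < θ̂₂ < … < θ̂_K satisfy |θ̂_i − θ_i| ≤ e for all i and the first-cluster balance condition ∫_{θ_min}^{θ̂₁} v(ω) dω = ∫_{θ̂₁}^{(θ̂₁+θ̂₂)/2} v(ω) dω. If σ > 0 satisfies Λ(ε) ≥ Λ(∞)·(1 − (Λ(σ)/Λ(0) − 1)/(2Kr)) and Λ(ζ/2 − e) ≥ Λ(∞)·(1 − (Λ(σ)/Λ(0) − 1)/(2(K−1)r + 1)), then Λ(θ̂₁ − θ₁) ≤ Λ(σ). -/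
open MeasureTheory Finset

private lemma aux_cancel (X A y : ℝ) (hX : X ≠ 0) : X * (A * (y / X)) = A * y := by
  field_simp

private lemma aux_half (L0 Ls : ℝ) (hL0 : L0 ≠ 0) :
    (2 * L0) * (Ls / L0 - 1) = 2 * (Ls - L0) := by
  field_simp

set_option maxHeartbeats 2000000 in
/-- First-cluster bound: under the separation, off-bound distance,
dynamic range, and accuracy hypotheses, if the first-cluster `K`-median balance condition
`∫_{θmin}^{θh 1} v = ∫_{θh 1}^{(θh 1 + θh 2)/2} v` holds for the proxy
`v(ω) = ∑ i, c i * λ(ω - θ i)`, and `σ > 0` satisfies the stated conditions on `Λ(ε)` and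
`Λ(ζ/2 - e)`, then `Λ(θh 1 - θ 1) ≤ Λ(σ)`. -/
theorem first_cluster_bound (lam : ℝ → ℝ)
    (hnn : ∀ ω, 0 ≤ lam ω) (hint : Integrable lam) (heven : ∀ ω, lam (-ω) = lam ω)
    (K : ℕ) (hK : 2 ≤ K) (θmin : ℝ) (θ θh c : ℕ → ℝ) (ζ ε r e σ : ℝ)
    (hθmin : θmin < θ 1)
    (hmono : ∀ i, 1 ≤ i → i < K → θ i < θ (i + 1))
    (hsep : ∀ i, 1 ≤ i → i < K → ζ ≤ θ (i + 1) - θ i)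
    (hoff : ε ≤ θ 1 - θmin)
    (hc : ∀ i, 1 ≤ i → i ≤ K → 0 < c i)
    (hr : ∀ i j, 1 ≤ i → i ≤ K → 1 ≤ j → j ≤ K → c i / c j ≤ r)
    (hhmono : ∀ i, 1 ≤ i → i < K → θh i < θh (i + 1))
    (he : ∀ i, 1 ≤ i → i ≤ K → |θh i - θ i| ≤ e)
    (hbal : (∫ ω in θmin..(θh 1), ∑ i ∈ Finset.Icc 1 K, c i * lam (ω - θ i)) =
      ∫ ω in (θh 1)..((θh 1 + θh 2) / 2), ∑ i ∈ Finset.Icc 1 K, c i * lam (ω - θ i))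
    (hσ : 0 < σ)
    (hε : cumul lam ε ≥
      (∫ ω, lam ω) * (1 - (cumul lam σ / cumul lam 0 - 1) / (2 * (K : ℝ) * r)))
    (hζ : cumul lam (ζ / 2 - e) ≥
      (∫ ω, lam ω) * (1 - (cumul lam σ / cumul lam 0 - 1) / (2 * ((K : ℝ) - 1) * r + 1))) :
    cumul lam (θh 1 - θ 1) ≤ cumul lam σ := by
  classical
  set A := ∫ ω, lam ω with hA
  have hAnn : 0 ≤ A := integral_nonneg hnn
  have hLmono : ∀ {x y : ℝ}, x ≤ y → cumul lam x ≤ cumul lam y := by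
    intro x y hxy
    exact setIntegral_mono_set hint.integrableOn (Filter.Eventually.of_forall hnn)
      (HasSubset.Subset.eventuallyLE (Set.Iic_subset_Iic.2 hxy))
  have hLnn : ∀ x : ℝ, 0 ≤ cumul lam x := fun x =>
    setIntegral_nonneg measurableSet_Iic fun ω _ => hnn ω
  have hLleA : ∀ x : ℝ, cumul lam x ≤ A := fun x =>
    setIntegral_le_integral hint (Filter.Eventually.of_forall hnn)
  have hneg : ∀ x : ℝ, cumul lam (-x) + cumul lam x = A := by
    intro x
    have h1 : (∫ ω in Set.Iic x, lam (-ω)) = ∫ ω in Set.Ioi (-x), lam ω :=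
      integral_comp_neg_Iic x lam
    simp only [heven] at h1
    have h2 := intervalIntegral.integral_Iic_add_Ioi (μ := volume) (b := -x) (f := lam)
      hint.integrableOn hint.integrableOn
    rw [← h1] at h2
    simpa [cumul, ← hA] using h2
  rcases le_or_gt A 0 with hA0 | hApos
  · have h1 := hLleA (θh 1 - θ 1)
    have h2 := hLnn σ
    linarith
  have hA2 : A = 2 * cumul lam 0 := by
    have h := hneg 0
    rw [neg_zero] at h
    linarith
  have hL0pos : 0 < cumul lam 0 := by linarith
  have hc1 : 0 < c 1 := hc 1 le_rfl (by omega)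
  have hr1 : 1 ≤ r := by
    have h := hr 1 1 le_rfl (by omega) le_rfl (by omega)
    rwa [div_self hc1.ne'] at h
  have hK2 : (2:ℝ) ≤ (K:ℝ) := by exact_mod_cast hK
  have hci : ∀ i, 1 ≤ i → i ≤ K → c i ≤ r * c 1 := by
    intro i h1 h2
    have h := hr i 1 h1 h2 le_rfl (by omega)
    rwa [div_le_iff₀ hc1] at h
  have hθmono' : ∀ j, j ≤ K → ∀ i, 1 ≤ i → i ≤ j → θ i ≤ θ j := by
    intro j
    induction j with
    | zero => intro _ i hi hij; omega
    | succ n ih =>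
      intro hjK i hi hij
      rcases Nat.lt_or_ge i (n+1) with h | h
      · exact (ih (by omega) i hi (by omega)).trans (hmono n (by omega) (by omega)).le
      · have hin : i = n + 1 := by omega
        rw [hin]
  have hII : ∀ (d a b : ℝ), (∫ ω in a..b, lam (ω - d)) =
      cumul lam (b - d) - cumul lam (a - d) := by
    intro d a b
    rw [intervalIntegral.integral_comp_sub_right lam d]
    simp only [cumul]
    exact (intervalIntegral.integral_Iic_sub_Iic hint.integrableOn hint.integrableOn).symm
  have hInt : ∀ (a b : ℝ), ∀ i ∈ Finset.Icc 1 K,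
      IntervalIntegrable (fun ω => c i * lam (ω - θ i)) volume a b := by
    intro a b i _
    exact ((hint.comp_sub_right (θ i)).const_mul (c i)).intervalIntegrable
  set m := (θh 1 + θh 2) / 2 with hm
  have hbal' : ∑ i ∈ Finset.Icc 1 K,
        c i * (cumul lam (θh 1 - θ i) - cumul lam (θmin - θ i)) =
      ∑ i ∈ Finset.Icc 1 K,
        c i * (cumul lam (m - θ i) - cumul lam (θh 1 - θ i)) := by
    rw [intervalIntegral.integral_finset_sum (hInt _ _),
        intervalIntegral.integral_finset_sum (hInt _ _)] at hbal
    simpa only [intervalIntegral.integral_const_mul, hII] using hbal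
  have hsplit : Finset.Icc 1 K = insert 1 (Finset.Icc 2 K) := by
    ext x; simp only [Finset.mem_Icc, Finset.mem_insert]; omega
  have hnm : (1:ℕ) ∉ Finset.Icc 2 K := by simp
  rw [hsplit, Finset.sum_insert hnm, Finset.sum_insert hnm] at hbal'
  have hεnn : 0 ≤ A - cumul lam ε := by have := hLleA ε; linarith
  have hznn : 0 ≤ A - cumul lam (ζ / 2 - e) := by have := hLleA (ζ / 2 - e); linarith
  have hεA : ∀ i, 1 ≤ i → i ≤ K → cumul lam (θmin - θ i) ≤ A - cumul lam ε := by
    intro i h1 h2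
    have hθi : θ 1 ≤ θ i := hθmono' i h2 1 le_rfl h1
    have hx : θmin - θ i ≤ -ε := by linarith
    have h3 := hLmono hx
    have h4 := hneg ε
    linarith
  have hmid : ∀ i, 2 ≤ i → i ≤ K → cumul lam (m - θ i) ≤ A - cumul lam (ζ / 2 - e) := by
    intro i h2i hiK
    have hθ2i : θ 2 ≤ θ i := hθmono' i hiK 2 (by omega) h2i
    have hζ12 : ζ ≤ θ 2 - θ 1 := by simpa using hsep 1 le_rfl (by omega)
    have hh1 : θh 1 ≤ θ 1 + e := by
      have h := abs_le.mp (he 1 le_rfl (by omega)); linarith [h.2]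
    have hh2 : θh 2 ≤ θ 2 + e := by
      have h := abs_le.mp (he 2 (by omega) hK); linarith [h.2]
    have hx : m - θ i ≤ -(ζ / 2 - e) := by rw [hm]; linarith
    have h3 := hLmono hx
    have h4 := hneg (ζ / 2 - e)
    linarith
  have cardIcc : ((Finset.Icc 2 K).card : ℝ) = (K:ℝ) - 1 := by
    rw [Nat.card_Icc]
    have h : K + 1 - 2 = K - 1 := by omega
    rw [h, Nat.cast_sub (by omega)]
    norm_num
  -- lower bound for the left tail
  have hTL : -(((K:ℝ) - 1) * (r * c 1 * (A - cumul lam ε))) ≤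
      ∑ i ∈ Finset.Icc 2 K, c i * (cumul lam (θh 1 - θ i) - cumul lam (θmin - θ i)) := by
    have hb : ∀ i ∈ Finset.Icc 2 K,
        -(r * c 1 * (A - cumul lam ε)) ≤
          c i * (cumul lam (θh 1 - θ i) - cumul lam (θmin - θ i)) := by
      intro i hi
      rw [Finset.mem_Icc] at hi
      have h1 := hLnn (θh 1 - θ i)
      have h2 := hεA i (by omega) hi.2
      have h3 := hc i (by omega) hi.2
      have h4 := hci i (by omega) hi.2
      have p1 : c i * cumul lam (θmin - θ i) ≤ c i * (A - cumul lam ε) :=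
        mul_le_mul_of_nonneg_left h2 h3.le
      have p2 : c i * (A - cumul lam ε) ≤ r * c 1 * (A - cumul lam ε) :=
        mul_le_mul_of_nonneg_right h4 hεnn
      have p3 : 0 ≤ c i * cumul lam (θh 1 - θ i) := mul_nonneg h3.le h1
      linarith [p1, p2, p3]
    have h := Finset.card_nsmul_le_sum (Finset.Icc 2 K) _ _ hb
    rwa [nsmul_eq_mul, cardIcc, mul_neg] at h
  -- upper bound for the right tail
  have hTR : ∑ i ∈ Finset.Icc 2 K, c i * (cumul lam (m - θ i) - cumul lam (θh 1 - θ i)) ≤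
      ((K:ℝ) - 1) * (r * c 1 * (A - cumul lam (ζ / 2 - e))) := by
    have hb : ∀ i ∈ Finset.Icc 2 K,
        c i * (cumul lam (m - θ i) - cumul lam (θh 1 - θ i)) ≤
          r * c 1 * (A - cumul lam (ζ / 2 - e)) := by
      intro i hi
      rw [Finset.mem_Icc] at hi
      have h1 := hLnn (θh 1 - θ i)
      have h2 := hmid i hi.1 hi.2
      have h3 := hc i (by omega) hi.2
      have h4 := hci i (by omega) hi.2
      have p1 : c i * (cumul lam (m - θ i) - cumul lam (θh 1 - θ i)) ≤
          c i * (A - cumul lam (ζ / 2 - e)) := by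
        apply mul_le_mul_of_nonneg_left _ h3.le
        linarith
      have p2 : c i * (A - cumul lam (ζ / 2 - e)) ≤
          r * c 1 * (A - cumul lam (ζ / 2 - e)) :=
        mul_le_mul_of_nonneg_right h4 hznn
      linarith
    have h := Finset.sum_le_card_nsmul (Finset.Icc 2 K) _ _ hb
    rwa [nsmul_eq_mul, cardIcc] at h
  -- head term bounds
  have hhead1 : c 1 * cumul lam (θh 1 - θ 1) - c 1 * (A - cumul lam ε) ≤
      c 1 * (cumul lam (θh 1 - θ 1) - cumul lam (θmin - θ 1)) := by
    have h := mul_le_mul_of_nonneg_left (hεA 1 le_rfl (by omega)) hc1.le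
    rw [mul_sub]
    linarith
  have hhead2 : c 1 * (cumul lam (m - θ 1) - cumul lam (θh 1 - θ 1)) ≤
      c 1 * A - c 1 * cumul lam (θh 1 - θ 1) := by
    have h := mul_le_mul_of_nonneg_left (hLleA (m - θ 1)) hc1.le
    rw [mul_sub]
    linarith
  have hmain : 2 * (c 1 * cumul lam (θh 1 - θ 1)) ≤
      c 1 * A + (c 1 + ((K:ℝ) - 1) * (r * c 1)) * (A - cumul lam ε) +
        ((K:ℝ) - 1) * (r * c 1) * (A - cumul lam (ζ / 2 - e)) := by
    linarith [hbal', hhead1, hhead2, hTL, hTR]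
  -- arithmetic from the σ-hypotheses
  have hKr : (0:ℝ) < 2 * (K:ℝ) * r := by nlinarith
  have hKr2 : (0:ℝ) < 2 * ((K:ℝ) - 1) * r + 1 := by nlinarith
  have hq : A * (cumul lam σ / cumul lam 0 - 1) = 2 * (cumul lam σ - cumul lam 0) := by
    rw [hA2]
    exact aux_half _ _ hL0pos.ne' 
  have key1 : 2 * (K:ℝ) * r * (A - cumul lam ε) ≤
      2 * (cumul lam σ - cumul lam 0) := by
    have h1 : A - cumul lam ε ≤
        A * ((cumul lam σ / cumul lam 0 - 1) / (2 * (K:ℝ) * r)) := by linarith [hε]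
    have h2 := mul_le_mul_of_nonneg_left h1 hKr.le
    have h3 : 2 * (K:ℝ) * r *
        (A * ((cumul lam σ / cumul lam 0 - 1) / (2 * (K:ℝ) * r))) =
        A * (cumul lam σ / cumul lam 0 - 1) := aux_cancel _ _ _ hKr.ne'
    linarith [hq]
  have key2 : (2 * ((K:ℝ) - 1) * r + 1) * (A - cumul lam (ζ / 2 - e)) ≤
      2 * (cumul lam σ - cumul lam 0) := by
    have h1 : A - cumul lam (ζ / 2 - e) ≤
        A * ((cumul lam σ / cumul lam 0 - 1) / (2 * ((K:ℝ) - 1) * r + 1)) := by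
      linarith [hζ]
    have h2 := mul_le_mul_of_nonneg_left h1 hKr2.le
    have h3 : (2 * ((K:ℝ) - 1) * r + 1) *
        (A * ((cumul lam σ / cumul lam 0 - 1) / (2 * ((K:ℝ) - 1) * r + 1))) =
        A * (cumul lam σ / cumul lam 0 - 1) := aux_cancel _ _ _ hKr2.ne'
    linarith [hq]
  have k1 := mul_le_mul_of_nonneg_left key1 hc1.le
  have k2 := mul_le_mul_of_nonneg_left key2 hc1.le
  have p3 : 0 ≤ c 1 * (r - 1) * (A - cumul lam ε) :=
    mul_nonneg (mul_nonneg hc1.le (by linarith)) hεnn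
  have p4 : 0 ≤ c 1 * (A - cumul lam (ζ / 2 - e)) := mul_nonneg hc1.le hznn
  have hA2c : c 1 * A = 2 * (c 1 * cumul lam 0) := by rw [hA2]; ring
  have hfin : c 1 * cumul lam (θh 1 - θ 1) ≤ c 1 * cumul lam σ := by
    linarith [hmain, k1, k2, p3, p4, hA2c]
  exact le_of_mul_le_mul_left hfin hc1
end

section
/- Let a > 0 and σ ≥ 0, and let A ≥ B ≥ 0, E ≥ 1, and S ≥ exp(−aσ) with S > 0. If A·E − B/E + 1 − 1/E = (A − B)/S, then E ≤ exp(aσ). In particular, when E = exp(a(θ_j − θ̂_j)) encodes the estimation error of the j-th component and S ≥ exp(−aσ), the balance equation forces the estimation error to satisfy θ_j − θ̂_j ≤ σ. -/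
open Real

/-- If `a > 0`, `σ ≥ 0`, `A ≥ B ≥ 0`, `E ≥ 1`, `S > 0` with
`S ≥ exp(-aσ)`, and the balance equation `A·E - B/E + 1 - 1/E = (A - B)/S` holds, then
`E ≤ exp(aσ)`; when `E = exp(a(θ_j - θ̂_j))` encodes the estimation error, this forces
`θ_j - θ̂_j ≤ σ`. -/
theorem balance_equation_error_bound (a σ A B E S : ℝ) (ha : 0 < a) (hσ : 0 ≤ σ)
    (hAB : B ≤ A) (hB : 0 ≤ B) (hE : 1 ≤ E)
    (hS : Real.exp (-a * σ) ≤ S) (hSpos : 0 < S)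
    (heq : A * E - B / E + 1 - 1 / E = (A - B) / S) :
    E ≤ Real.exp (a * σ) := by
  by_contra h
  push_neg at h
  set M := Real.exp (a * σ) with hM
  have hM1 : 1 ≤ M := Real.one_le_exp (by positivity)
  have hMpos : (0:ℝ) < M := lt_of_lt_of_le one_pos hM1
  have hMS : 1 ≤ M * S := by
    have h1 : Real.exp (-a * σ) * M = 1 := by
      rw [hM, ← Real.exp_add]; ring_nf; exact Real.exp_zero
    nlinarith [mul_le_mul_of_nonneg_right hS (le_of_lt hMpos)]
  have hEpos : (0:ℝ) < E := lt_of_lt_of_le one_pos hE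
  have hE0 : E ≠ 0 := ne_of_gt hEpos
  have hS0 : S ≠ 0 := ne_of_gt hSpos
  have heq' : (A * E - B / E + 1 - 1 / E) * (E * S) = ((A - B) / S) * (E * S) := by
    rw [heq]
  have heq2 : (A * E * E - B + E - 1) * S = (A - B) * E := by
    have h2 : ((A * E * E - B + E - 1) * S - (A - B) * E) * (E * S) = 0 := by
      field_simp at heq'
      linear_combination (E * S) * heq'
    rcases mul_eq_zero.mp h2 with h3 | h3
    · linarith
    · exact absurd h3 (by positivity)
  have hA : 0 ≤ A := le_trans hB hAB
  have hpos : 0 ≤ A * E * E - B + E - 1 := by nlinarith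
  have h1 : A * E * E - B + E - 1 ≤ (A * E * E - B + E - 1) * (S * M) := by
    nlinarith
  have h2 : (A * E * E - B + E - 1) * (S * M) = (A - B) * E * M := by
    linear_combination M * heq2
  have h3 : 0 ≤ A * E * (E - M) :=
    mul_nonneg (mul_nonneg hA hEpos.le) (sub_pos.mpr h).le
  have h4 : 0 ≤ B * (E * M - 1) := mul_nonneg hB (by nlinarith)
  nlinarith [h1, h2, h3, h4]
end
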